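/- Let U ⊂ ℝⁿ be connected open, and suppose P : U → M_k(ℝ) is differentiable and satisfies ∂_i P = −A_i P for smooth matrix functions A_i. If P(x₀) is invertible at some point x₀ ∈ U, then P(x) is invertible for every x ∈ U. (Hint: the function det P satisfies a linear ODE along paths, or consider Q solving ∂_i Q = Q A_i with Q(x₀) = P(x₀)^{-1}; then QP is constant equal to I.) -/

import Mathlib

attribute [local instance] Matrix.linftyOpNormedAddCommGroup Matrix.linftyOpNormedRing
  Matrix.linftyOpNormedAlgebra

open Matrix Metric Set

noncomputable def mulVecCLM (k : ℕ) (w : Fin k → ℝ) :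
    Matrix (Fin k) (Fin k) ℝ →L[ℝ] (Fin k → ℝ) :=
  LinearMap.toContinuousLinearMap
    { toFun := fun M => M *ᵥ w
      map_add' := fun M N => Matrix.add_mulVec M N w
      map_smul' := fun c M => Matrix.smul_mulVec c M w }

@[simp] lemma mulVecCLM_apply (k : ℕ) (w : Fin k → ℝ) (M : Matrix (Fin k) (Fin k) ℝ) :
    mulVecCLM k w M = M *ᵥ w := rfl

lemma euclidean_decomp (n : ℕ) (d : EuclideanSpace ℝ (Fin n)) :
    d = ∑ i, d i • EuclideanSpace.single i (1:ℝ) := by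
  ext j
  simp [Pi.single_apply]

lemma sum_smul_mulVec {k n : ℕ} (g : Fin n → Matrix (Fin k) (Fin k) ℝ) (c : Fin n → ℝ)
    (v : Fin k → ℝ) : (∑ i, c i • g i) *ᵥ v = ∑ i, c i • (g i *ᵥ v) := by
  have h := map_sum (Matrix.mulVec.addMonoidHomLeft v) (fun i => c i • g i) Finset.univ
  simp only [Matrix.mulVec.addMonoidHomLeft] at h
  rw [show (∑ i, c i • g i) *ᵥ v = ∑ i, (c i • g i) *ᵥ v from h]
  refine Finset.sum_congr rfl fun i _ => ?_
  exact Matrix.smul_mulVec _ _ _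

lemma kernel_propagates (n k : ℕ) (U : Set (EuclideanSpace ℝ (Fin n))) (hU : IsOpen U)
    (A : Fin n → EuclideanSpace ℝ (Fin n) → Matrix (Fin k) (Fin k) ℝ)
    (hA : ∀ i, ContinuousOn (A i) U)
    (P : EuclideanSpace ℝ (Fin n) → Matrix (Fin k) (Fin k) ℝ)
    (hP : DifferentiableOn ℝ P U)
    (hPeq : ∀ i, ∀ x ∈ U,
      fderiv ℝ P x (EuclideanSpace.single i 1) = -(A i x * P x))
    (x : EuclideanSpace ℝ (Fin n)) (hx : x ∈ U) (w : Fin k → ℝ) (hw : P x *ᵥ w = 0) :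
    ∃ r > 0, ball x r ⊆ U ∧ ∀ z ∈ ball x r, P z *ᵥ w = 0 := by
  obtain ⟨r1, hr1, hball⟩ := Metric.isOpen_iff.mp hU x hx
  have hsub : ball x (r1/2) ⊆ U := (ball_subset_ball (by linarith)).trans hball
  have hcb : closedBall x (r1/2) ⊆ U := (closedBall_subset_ball (by linarith)).trans hball
  choose C hC using fun i =>
    (isCompact_closedBall x (r1/2)).exists_bound_of_continuousOn ((hA i).mono hcb)
  refine ⟨r1/2, by positivity, hsub, ?_⟩
  intro z hz
  set d : EuclideanSpace ℝ (Fin n) := z - x with hd_def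
  set γ : ℝ → EuclideanSpace ℝ (Fin n) := fun t => x + t • d with hγ_def
  have hγmem : ∀ t ∈ Icc (0:ℝ) 1, γ t ∈ ball x (r1/2) := by
    intro t ht
    have hdist : dist (γ t) x = |t| * ‖d‖ := by
      simp [hγ_def, dist_eq_norm, norm_smul]
    rw [mem_ball, hdist]
    have h1 : |t| * ‖d‖ ≤ ‖d‖ := by
      have := abs_le.mpr ⟨by linarith [ht.1], ht.2⟩
      nlinarith [norm_nonneg d, abs_nonneg t]
    have h2 : ‖d‖ < r1/2 := by
      rw [hd_def, ← dist_eq_norm]; exact hz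
    linarith
  set f : ℝ → (Fin k → ℝ) := fun t => P (γ t) *ᵥ w with hf_def
  set f' : ℝ → (Fin k → ℝ) := fun t => -((∑ i, d i • A i (γ t)) *ᵥ f t) with hf'_def
  have hderiv : ∀ t ∈ Icc (0:ℝ) 1, HasDerivAt f (f' t) t := by
    intro t ht
    have hmem : γ t ∈ U := hsub (hγmem t ht)
    have hPd : HasFDerivAt P (fderiv ℝ P (γ t)) (γ t) :=
      (hP.differentiableAt (hU.mem_nhds hmem)).hasFDerivAt
    have hγd : HasDerivAt γ d t := by
      rw [hγ_def]; simpa using ((hasDerivAt_id t).smul_const d).const_add x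
    have h1 : HasDerivAt (fun s => P (γ s)) (fderiv ℝ P (γ t) d) t :=
      hPd.comp_hasDerivAt t hγd
    have h2 : HasDerivAt f (mulVecCLM k w (fderiv ℝ P (γ t) d)) t :=
      (mulVecCLM k w).hasFDerivAt.comp_hasDerivAt t h1
    have hfd : fderiv ℝ P (γ t) d = ∑ i, d i • (-(A i (γ t) * P (γ t))) := by
      conv_lhs => rw [euclidean_decomp n d]
      rw [map_sum]
      refine Finset.sum_congr rfl fun i _ => ?_
      rw [(fderiv ℝ P (γ t)).map_smul, hPeq i _ hmem]
    have key : mulVecCLM k w (fderiv ℝ P (γ t) d) = f' t := by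
      rw [hfd, map_sum, hf'_def]
      simp only [(mulVecCLM k w).map_smul, mulVecCLM_apply]
      rw [hf_def]
      rw [sum_smul_mulVec (fun i => A i (γ t)) (fun i => d i) (P (γ t) *ᵥ w)]
      rw [← Finset.sum_neg_distrib]
      refine Finset.sum_congr rfl fun i _ => ?_
      rw [Matrix.neg_mulVec, Matrix.mulVec_mulVec, smul_neg]
    rw [← key]; exact h2
  set K : ℝ := ∑ i, |d i| * C i with hK_def
  have hbound : ∀ t ∈ Ico (0:ℝ) 1, ‖f' t‖ ≤ K * ‖f t‖ + 0 := by
    intro t ht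
    have hmem : γ t ∈ closedBall x (r1/2) := ball_subset_closedBall (hγmem t (Ico_subset_Icc_self ht))
    rw [hf'_def]
    simp only [norm_neg, add_zero]
    calc ‖(∑ i, d i • A i (γ t)) *ᵥ f t‖
        ≤ ‖∑ i, d i • A i (γ t)‖ * ‖f t‖ := Matrix.linfty_opNorm_mulVec _ _
      _ ≤ K * ‖f t‖ := by
          refine mul_le_mul_of_nonneg_right ?_ (norm_nonneg _)
          refine (norm_sum_le _ _).trans ?_
          rw [hK_def]
          refine Finset.sum_le_sum fun i _ => ?_
          rw [norm_smul, Real.norm_eq_abs]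
          exact mul_le_mul_of_nonneg_left (hC i _ hmem) (abs_nonneg _)
  have hcont : ContinuousOn f (Icc 0 1) := fun t ht =>
    (hderiv t ht).continuousAt.continuousWithinAt
  have hf0 : ‖f 0‖ ≤ 0 := by
    rw [hf_def]
    simp only [hγ_def]
    rw [show x + (0:ℝ) • d = x by simp, hw]
    simp
  have hgron := norm_le_gronwallBound_of_norm_deriv_right_le hcont
    (fun t ht => (hderiv t (Ico_subset_Icc_self ht)).hasDerivWithinAt) hf0 hbound
  have hfin : ‖f 1‖ ≤ 0 := by
    have := hgron 1 ⟨zero_le_one, le_refl 1⟩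
    rwa [gronwallBound_ε0_δ0] at this
  have hf1 : f 1 = 0 := by
    have := norm_nonneg (f 1)
    have : ‖f 1‖ = 0 := le_antisymm hfin this
    exact norm_eq_zero.mp this
  have hγ1 : γ 1 = z := by
    rw [hγ_def]; simp [hd_def]
  rw [hf_def] at hf1
  simpa [hγ1] using hf1

/-- Invertibility propagation for the Pfaff system: if `P` is differentiable on a
connected open `U ⊆ ℝⁿ` with `∂_i P = −A_i P` for smooth `A_i`, and `P(x₀)` is
invertible at some `x₀ ∈ U`, then `P(x)` is invertible for every `x ∈ U`. -/
theorem stmt11 (n k : ℕ) (U : Set (EuclideanSpace ℝ (Fin n)))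
    (hU : IsOpen U) (hconn : IsConnected U)
    (A : Fin n → EuclideanSpace ℝ (Fin n) → Matrix (Fin k) (Fin k) ℝ)
    (hA : ∀ i, ContDiffOn ℝ (⊤ : ℕ∞) (A i) U)
    (P : EuclideanSpace ℝ (Fin n) → Matrix (Fin k) (Fin k) ℝ)
    (hP : DifferentiableOn ℝ P U)
    (hPeq : ∀ i, ∀ x ∈ U,
      fderiv ℝ P x (EuclideanSpace.single i 1) = -(A i x * P x))
    (x₀ : EuclideanSpace ℝ (Fin n)) (hx₀ : x₀ ∈ U) (hinv : IsUnit (P x₀)) :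
    ∀ x ∈ U, IsUnit (P x) := by
  classical
  set S : Set (EuclideanSpace ℝ (Fin n)) := {x | x ∈ U ∧ IsUnit (P x)} with hS_def
  set T : Set (EuclideanSpace ℝ (Fin n)) := {x | x ∈ U ∧ ¬ IsUnit (P x)} with hT_def
  have hdetcont : ∀ x ∈ U, ContinuousAt (fun y => (P y).det) x := by
    intro x hx
    exact (Continuous.matrix_det continuous_id).continuousAt.comp
      ((hP.differentiableAt (hU.mem_nhds hx)).continuousAt)
  have hSopen : IsOpen S := by
    rw [isOpen_iff_mem_nhds]
    rintro x ⟨hxU, hxunit⟩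
    have hdetne : (P x).det ≠ 0 := by
      intro h
      exact (by simpa [h] using (Matrix.isUnit_iff_isUnit_det (P x)).mp hxunit : IsUnit (0:ℝ)).ne_zero rfl
    have h1 : ∀ᶠ y in nhds x, (P y).det ≠ 0 := (hdetcont x hxU).eventually_ne hdetne
    filter_upwards [h1, hU.mem_nhds hxU] with y hy hyU
    exact ⟨hyU, (Matrix.isUnit_iff_isUnit_det (P y)).mpr (isUnit_iff_ne_zero.mpr hy)⟩
  have hTopen : IsOpen T := by
    rw [isOpen_iff_mem_nhds]
    rintro x ⟨hxU, hxnot⟩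
    have hdet0 : (P x).det = 0 := by
      by_contra h
      exact hxnot ((Matrix.isUnit_iff_isUnit_det (P x)).mpr (isUnit_iff_ne_zero.mpr h))
    obtain ⟨w, hw0, hww⟩ := (Matrix.exists_mulVec_eq_zero_iff).mpr hdet0
    obtain ⟨r, hr, hrU, hker⟩ := kernel_propagates n k U hU A
      (fun i => (hA i).continuousOn) P hP hPeq x hxU w hww
    refine Filter.mem_of_superset (Metric.ball_mem_nhds x hr) ?_
    intro z hz
    refine ⟨hrU hz, ?_⟩
    intro hunit
    have : (P z).det = 0 := Matrix.exists_mulVec_eq_zero_iff.mp ⟨w, hw0, hker z hz⟩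
    exact ((Matrix.isUnit_iff_isUnit_det (P z)).mp hunit).ne_zero this
  intro x hx
  by_contra hxnot
  have hUsub : U ⊆ S ∪ T := fun y hy => by
    by_cases h : IsUnit (P y)
    · exact Or.inl ⟨hy, h⟩
    · exact Or.inr ⟨hy, h⟩
  have hne1 : (U ∩ S).Nonempty := ⟨x₀, hx₀, hx₀, hinv⟩
  have hne2 : (U ∩ T).Nonempty := ⟨x, hx, hx, hxnot⟩
  obtain ⟨y, _, ⟨_, hy1⟩, ⟨_, hy2⟩⟩ := hconn.isPreconnected S T hSopen hTopen hUsub hne1 hne2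
  exact hy2 hy1
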